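/- Let n be a natural number and let 𝔞 = [a_ij] be an n×n integer matrix. For 1 ≤ i ≤ n set a_i = (x_1²)^{a_i1} ⋯ (x_n²)^{a_in} ∈ A_n. Then there exists a unique group endomorphism t_𝔞 of G_n such that t_𝔞(x_i) = x_i a_i for all 1 ≤ i ≤ n. -/

import Mathlib

/-- The defining relations of the combinatorial Hantzsche-Wendt group `G_n`:
`x_i⁻¹ x_j² x_i = x_j⁻²` for all `i ≠ j`, written as relators. -/
def HWrels (n : ℕ) : Set (FreeGroup (Fin n)) :=
  {r | ∃ i j : Fin n, i ≠ j ∧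
    r = (FreeGroup.of i)⁻¹ * FreeGroup.of j ^ 2 * FreeGroup.of i * FreeGroup.of j ^ 2}

/-- The combinatorial Hantzsche-Wendt group `G_n`. -/
abbrev HW (n : ℕ) : Type := PresentedGroup (HWrels n)

/-- The generators `x_1, …, x_n` of `G_n`. -/
def x (n : ℕ) (i : Fin n) : HW n := PresentedGroup.of i

/-- For an `n × n` integer matrix `𝔞 = [a_ij]`, the element
`a_i = (x_1²)^{a_i1} ⋯ (x_n²)^{a_in}` of `A_n ≤ G_n`. -/
def aElt (n : ℕ) (𝔞 : Matrix (Fin n) (Fin n) ℤ) (i : Fin n) : HW n :=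
  ((List.finRange n).map fun j => (x n j ^ 2) ^ 𝔞 i j).prod

/-! The squares `x_j²` commute pairwise, since conjugation by `x_k` inverts `x_j²` (`j ≠ k`) and
so `x_j²` commutes with `x_k²`; hence `A_n` is abelian, and it is normalised by every `x_i`.
For `a ∈ A_n` we have `(x_j a)² = x_j² · (x_j⁻¹ a x_j) a`, a power of `x_j²`, and conjugation by
`x_i a'` with `i ≠ j`, `a' ∈ A_n` inverts every power of `x_j²`. So `x_i ↦ x_i a_i` respects the
defining relations; uniqueness holds because the `x_i` generate `G_n`. -/

theorem commute_sq_of_inv_mul_mul_eq_inv {G : Type*} [Group G] {y z : G}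
    (h : z⁻¹ * y * z = y⁻¹) : Commute y (z ^ 2) := by
  have hyz : y * z = z * y⁻¹ := by rw [← inv_mul_eq_iff_eq_mul, ← mul_assoc, h]
  have hyz' : y⁻¹ * z = z * y :=
    calc y⁻¹ * z = y⁻¹ * (z * y⁻¹) * y := by group
      _ = z * y := by rw [← hyz]; group
  calc y * z ^ 2 = y * z * z := by rw [sq]; group
    _ = z * (y⁻¹ * z) := by rw [hyz]; group
    _ = z ^ 2 * y := by rw [hyz', sq]; group

namespace HW

variable {n : ℕ}

theorem inv_mul_sq_mul_of_ne {i j : Fin n} (h : i ≠ j) :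
    (x n i)⁻¹ * x n j ^ 2 * x n i = (x n j ^ 2)⁻¹ := by
  have hrel : PresentedGroup.mk (HWrels n)
      ((FreeGroup.of i)⁻¹ * FreeGroup.of j ^ 2 * FreeGroup.of i * FreeGroup.of j ^ 2) = 1 :=
    (QuotientGroup.eq_one_iff _).mpr (Subgroup.subset_normalClosure ⟨i, j, h, rfl⟩)
  exact mul_eq_one_iff_eq_inv.mp (by simpa [x, PresentedGroup.of] using hrel)

theorem commute_sq (j k : Fin n) : Commute (x n j ^ 2) (x n k ^ 2) := by
  rcases eq_or_ne j k with rfl | h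
  · exact Commute.refl _
  · exact commute_sq_of_inv_mul_mul_eq_inv (inv_mul_sq_mul_of_ne h.symm)

variable (n) in
/-- The subgroup `A_n`. -/
def sqSubgroup : Subgroup (HW n) := Subgroup.closure (Set.range fun j => x n j ^ 2)

theorem sq_mem_sqSubgroup (j : Fin n) : x n j ^ 2 ∈ sqSubgroup n :=
  Subgroup.subset_closure ⟨j, rfl⟩

theorem commute_of_mem_sqSubgroup {a b : HW n} (ha : a ∈ sqSubgroup n)
    (hb : b ∈ sqSubgroup n) : Commute a b := by
  have hle := Subgroup.closure_le_centralizer_centralizer (Set.range fun j => x n j ^ 2)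
  refine Set.centralizer_centralizer_comm_of_comm ?_ a (hle ha) b (hle hb)
  rintro _ ⟨j, rfl⟩ _ ⟨k, rfl⟩
  exact commute_sq j k

theorem aElt_mem_sqSubgroup (𝔞 : Matrix (Fin n) (Fin n) ℤ) (i : Fin n) :
    aElt n 𝔞 i ∈ sqSubgroup n := by
  refine Subgroup.list_prod_mem _ fun a ha => ?_
  obtain ⟨j, -, rfl⟩ := List.mem_map.mp ha
  exact zpow_mem (sq_mem_sqSubgroup j) _

theorem inv_mul_mul_mem_sqSubgroup (i : Fin n) {a : HW n} (ha : a ∈ sqSubgroup n) :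
    (x n i)⁻¹ * a * x n i ∈ sqSubgroup n := by
  induction ha using Subgroup.closure_induction with
  | mem _ hg =>
    obtain ⟨j, rfl⟩ := hg
    rcases eq_or_ne i j with rfl | h
    · rw [show (x n i)⁻¹ * x n i ^ 2 * x n i = x n i ^ 2 by simp only [sq]; group]
      exact sq_mem_sqSubgroup i
    · rw [inv_mul_sq_mul_of_ne h]
      exact inv_mem (sq_mem_sqSubgroup j)
  | one => simp
  | mul a b _ _ ha hb =>
    rw [show (x n i)⁻¹ * (a * b) * x n i = (x n i)⁻¹ * a * x n i * ((x n i)⁻¹ * b * x n i) by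
        group]
    exact mul_mem ha hb
  | inv a _ ha =>
    rw [show (x n i)⁻¹ * a⁻¹ * x n i = ((x n i)⁻¹ * a * x n i)⁻¹ by group]
    exact inv_mem ha

/-- On the abelian group `A_n`, `a ↦ x_j⁻¹ a x_j a` is a homomorphism killing `x_k²` for `k ≠ j`
and sending `x_j²` to `x_j⁴`. -/
theorem inv_mul_mul_mul_mem_zpowers (j : Fin n) {a : HW n} (ha : a ∈ sqSubgroup n) :
    (x n j)⁻¹ * a * x n j * a ∈ Subgroup.zpowers (x n j ^ 2) := by
  induction ha using Subgroup.closure_induction with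
  | mem _ hg =>
    obtain ⟨k, rfl⟩ := hg
    rcases eq_or_ne j k with rfl | h
    · rw [show (x n j)⁻¹ * x n j ^ 2 * x n j * x n j ^ 2 = (x n j ^ 2) ^ 2 by
        simp only [sq]; group]
      exact Subgroup.pow_mem _ (Subgroup.mem_zpowers _) 2
    · rw [inv_mul_sq_mul_of_ne h, inv_mul_cancel]
      exact one_mem _
  | one => simp
  | mul a b ha hb hpa hpb =>
    have hcomm : Commute ((x n j)⁻¹ * b * x n j) a :=
      commute_of_mem_sqSubgroup (inv_mul_mul_mem_sqSubgroup j hb) ha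
    have hsplit : (x n j)⁻¹ * (a * b) * x n j * (a * b)
        = (x n j)⁻¹ * a * x n j * a * ((x n j)⁻¹ * b * x n j * b) :=
      calc _ = (x n j)⁻¹ * a * x n j * (((x n j)⁻¹ * b * x n j) * a) * b := by group
        _ = _ := by rw [hcomm.eq]; group
    rw [hsplit]
    exact mul_mem hpa hpb
  | inv a ha hpa =>
    have hcomm : Commute ((x n j)⁻¹ * a * x n j) a :=
      commute_of_mem_sqSubgroup (inv_mul_mul_mem_sqSubgroup j ha) ha
    have hsplit : (x n j)⁻¹ * a⁻¹ * x n j * a⁻¹ = ((x n j)⁻¹ * a * x n j * a)⁻¹ :=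
      calc _ = (a * ((x n j)⁻¹ * a * x n j))⁻¹ := by group
        _ = _ := by rw [← hcomm.eq]
    rw [hsplit]
    exact inv_mem hpa

theorem sq_x_mul_mem_zpowers (j : Fin n) {a : HW n} (ha : a ∈ sqSubgroup n) :
    (x n j * a) ^ 2 ∈ Subgroup.zpowers (x n j ^ 2) := by
  rw [show (x n j * a) ^ 2 = x n j ^ 2 * ((x n j)⁻¹ * a * x n j * a) by
    simp only [sq]; group]
  exact mul_mem (Subgroup.mem_zpowers _) (inv_mul_mul_mul_mem_zpowers j ha)

theorem conj_x_mul_of_mem_zpowers {i j : Fin n} (h : i ≠ j) {a w : HW n}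
    (ha : a ∈ sqSubgroup n) (hw : w ∈ Subgroup.zpowers (x n j ^ 2)) :
    (x n i * a)⁻¹ * w * (x n i * a) = w⁻¹ := by
  obtain ⟨m, rfl⟩ := Subgroup.mem_zpowers_iff.mp hw
  have hconj : (x n i)⁻¹ * (x n j ^ 2) ^ m * x n i = ((x n j ^ 2) ^ m)⁻¹ := by
    have hpow := conj_zpow (a := (x n i)⁻¹) (b := x n j ^ 2) (i := m)
    rw [inv_inv] at hpow
    rw [← hpow, inv_mul_sq_mul_of_ne h, inv_zpow]
  have hcomm : Commute a ((x n j ^ 2) ^ m)⁻¹ :=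
    commute_of_mem_sqSubgroup ha (inv_mem (zpow_mem (sq_mem_sqSubgroup j) m))
  calc (x n i * a)⁻¹ * (x n j ^ 2) ^ m * (x n i * a)
      = a⁻¹ * ((x n i)⁻¹ * (x n j ^ 2) ^ m * x n i) * a := by group
    _ = ((x n j ^ 2) ^ m)⁻¹ := by rw [hconj, mul_assoc, ← hcomm.eq, inv_mul_cancel_left]

theorem existsUnique_hom_x_mul {a : Fin n → HW n} (ha : ∀ i, a i ∈ sqSubgroup n) :
    ∃! t : HW n →* HW n, ∀ i, t (x n i) = x n i * a i := by
  have hrels : ∀ r ∈ HWrels n, FreeGroup.lift (fun i => x n i * a i) r = 1 := by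
    rintro r ⟨i, j, hij, rfl⟩
    simp only [map_mul, map_inv, map_pow, FreeGroup.lift_apply_of]
    rw [conj_x_mul_of_mem_zpowers hij (ha i) (sq_x_mul_mem_zpowers j (ha j)), inv_mul_cancel]
  refine ⟨PresentedGroup.toGroup hrels, fun i => PresentedGroup.toGroup.of hrels, fun t ht => ?_⟩
  exact PresentedGroup.ext fun i => (ht i).trans (PresentedGroup.toGroup.of hrels).symm

end HW

theorem stmt1 (n : ℕ) (𝔞 : Matrix (Fin n) (Fin n) ℤ) :
    ∃! t : HW n →* HW n, ∀ i : Fin n, t (x n i) = x n i * aElt n 𝔞 i :=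
  HW.existsUnique_hom_x_mul (HW.aElt_mem_sqSubgroup 𝔞)
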